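/- For all real numbers ν, b with 0 < ν < 1 and 0 < b < 1, one has (1/(2π)) · ∫_{−π}^{π} |1 − ν − e^{iω}|² / |1 − b − e^{iω}|² dω = (1 + (1 − ν)²)/(b(2 − b)) − 2(1 − ν)(1 − b)/(b(2 − b)). -/

import Mathlib

/-!
With α = 1 - ν and β = 1 - b the integrand is (1 + α² - 2α cos ω) / (1 + β² - 2β cos ω). Its
numerator is α / β times the denominator plus a constant, so everything reduces to the Poisson
kernel integral ∫ (1 + β² - 2β cos x)⁻¹ = 2π / (1 - β²) for |β| < 1, which follows from an explicit
arctan primitive.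
-/

open MeasureTheory Real

lemma norm_one_sub_ofReal_sub_exp_sq (a ω : ℝ) :
    ‖(1 : ℂ) - (a : ℂ) - Complex.exp (Complex.I * (ω : ℂ))‖ ^ 2
      = 1 + (1 - a) ^ 2 - 2 * (1 - a) * cos ω := by
  rw [mul_comm, Complex.exp_mul_I, ← Complex.ofReal_cos, ← Complex.ofReal_sin, Complex.sq_norm,
    Complex.normSq_apply]
  simp only [Complex.sub_re, Complex.sub_im, Complex.add_re, Complex.add_im, Complex.one_re,
    Complex.one_im, Complex.ofReal_re, Complex.ofReal_im, Complex.mul_re, Complex.mul_im,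
    Complex.I_re, Complex.I_im]
  linear_combination sin_sq_add_cos_sq ω

section PoissonKernel

variable {β : ℝ}

lemma one_sub_sq_pos (hβ : |β| < 1) : 0 < 1 - β ^ 2 :=
  sub_pos.mpr ((sq_lt_one_iff_abs_lt_one β).mpr hβ)

lemma one_sub_mul_cos_pos (hβ : |β| < 1) (x : ℝ) : 0 < 1 - β * cos x := by
  have : |β * cos x| < 1 :=
    (abs_mul β (cos x)).trans_lt (mul_lt_one_of_nonneg_of_lt_one_left (abs_nonneg _) hβ
      (abs_cos_le_one x))
  linarith [le_abs_self (β * cos x)]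

lemma one_add_sq_sub_two_mul_cos_pos (hβ : |β| < 1) (x : ℝ) :
    0 < 1 + β ^ 2 - 2 * β * cos x := by
  nlinarith [one_sub_mul_cos_pos hβ x, sin_sq_add_cos_sq x, sq_nonneg (β * sin x)]

lemma continuous_inv_one_add_sq_sub_two_mul_cos (hβ : |β| < 1) :
    Continuous fun x => (1 + β ^ 2 - 2 * β * cos x)⁻¹ :=
  (by fun_prop : Continuous fun x => 1 + β ^ 2 - 2 * β * cos x).inv₀
    fun x => (one_add_sq_sub_two_mul_cos_pos hβ x).ne'

-- Unlike the half-angle primitive 2 arctan((1+β)/(1-β) · tan(x/2)) / (1 - β²), which jumps at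
-- x = ±π, this one is smooth on all of ℝ, since 1 - β cos x > 0.
lemma hasDerivAt_arctan_poisson (hβ : |β| < 1) (x : ℝ) :
    HasDerivAt (fun x => (x + 2 * arctan (β * sin x / (1 - β * cos x))) / (1 - β ^ 2))
      (1 + β ^ 2 - 2 * β * cos x)⁻¹ x := by
  have hc := one_sub_mul_cos_pos hβ x
  have hd := one_add_sq_sub_two_mul_cos_pos hβ x
  have hβ2 := (one_sub_sq_pos hβ).ne'
  have hq : HasDerivAt (fun x => β * sin x / (1 - β * cos x))
      ((β * cos x - β ^ 2) / (1 - β * cos x) ^ 2) x :=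
    (((hasDerivAt_sin x).const_mul β).div (((hasDerivAt_cos x).const_mul β).const_sub 1)
      hc.ne').congr_deriv
      (by linear_combination (-β ^ 2 / (1 - β * cos x) ^ 2) * sin_sq_add_cos_sq x)
  refine (((hasDerivAt_id x).add (hq.arctan.const_mul 2)).div_const _).congr_deriv ?_
  have hsq : 1 + (β * sin x / (1 - β * cos x)) ^ 2
      = (1 + β ^ 2 - 2 * β * cos x) / (1 - β * cos x) ^ 2 := by
    field_simp
    linear_combination β ^ 2 * sin_sq_add_cos_sq x
  rw [hsq]
  field_simp
  ring

theorem integral_inv_one_add_sq_sub_two_mul_cos (hβ : |β| < 1) :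
    ∫ x in (-π)..π, (1 + β ^ 2 - 2 * β * cos x)⁻¹ = 2 * π / (1 - β ^ 2) := by
  rw [intervalIntegral.integral_eq_sub_of_hasDerivAt (fun x _ => hasDerivAt_arctan_poisson hβ x)
    ((continuous_inv_one_add_sq_sub_two_mul_cos hβ).intervalIntegrable _ _)]
  simp only [sin_pi, sin_neg, neg_zero, mul_zero, zero_div, arctan_zero]
  ring

theorem integral_div_one_add_sq_sub_two_mul_cos (α : ℝ) (hβ : |β| < 1) :
    ∫ x in (-π)..π, (1 + α ^ 2 - 2 * α * cos x) / (1 + β ^ 2 - 2 * β * cos x)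
      = 2 * π * (1 + α ^ 2 - 2 * α * β) / (1 - β ^ 2) := by
  rcases eq_or_ne β 0 with rfl | hβ0
  · simp only [ne_eq, OfNat.ofNat_ne_zero, not_false_eq_true, zero_pow, add_zero, mul_zero,
      zero_mul, sub_zero, div_one]
    rw [intervalIntegral.integral_sub intervalIntegrable_const
      (continuous_cos.intervalIntegrable _ _ |>.const_mul _), intervalIntegral.integral_const_mul,
      integral_cos]
    simp only [intervalIntegral.integral_const, sin_pi, sin_neg, smul_eq_mul]
    ring
  · set K := 1 + α ^ 2 - α * (1 + β ^ 2) / β with hK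
    have hsplit : ∀ x, (1 + α ^ 2 - 2 * α * cos x) / (1 + β ^ 2 - 2 * β * cos x)
        = α / β + K * (1 + β ^ 2 - 2 * β * cos x)⁻¹ := fun x => by
      have hd := (one_add_sq_sub_two_mul_cos_pos hβ x).ne'
      rw [div_eq_iff hd, add_mul, inv_mul_cancel_right₀ hd, hK]
      field_simp
      ring
    have hβ2 := (one_sub_sq_pos hβ).ne'
    simp_rw [hsplit]
    rw [intervalIntegral.integral_add intervalIntegrable_const
      (((continuous_inv_one_add_sq_sub_two_mul_cos hβ).intervalIntegrable _ _).const_mul K),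
      intervalIntegral.integral_const, intervalIntegral.integral_const_mul,
      integral_inv_one_add_sq_sub_two_mul_cos hβ, smul_eq_mul, hK]
    field_simp
    ring

end PoissonKernel

theorem integral_sq_ratio_eval_general (ν b : ℝ)
    (hb0 : 0 < b) (hb1 : b < 1) :
    (1 / (2 * π)) *
        (∫ ω in Set.Icc (-π) π,
          ‖(1 : ℂ) - (ν : ℂ) - Complex.exp (Complex.I * (ω : ℂ))‖ ^ 2 /
            ‖(1 : ℂ) - (b : ℂ) - Complex.exp (Complex.I * (ω : ℂ))‖ ^ 2)
      = (1 + (1 - ν) ^ 2) / (b * (2 - b)) - 2 * (1 - ν) * (1 - b) / (b * (2 - b)) := by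
  have hβ : |1 - b| < 1 := abs_lt.mpr ⟨by linarith, by linarith⟩
  rw [integral_Icc_eq_integral_Ioc, ← intervalIntegral.integral_of_le (by linarith [pi_pos])]
  simp_rw [norm_one_sub_ofReal_sub_exp_sq]
  rw [integral_div_one_add_sq_sub_two_mul_cos (1 - ν) hβ]
  have hb2 : 2 - b ≠ 0 := by linarith
  rw [show 1 - (1 - b) ^ 2 = b * (2 - b) by ring]
  field_simp

theorem integral_sq_ratio_eval (ν b : ℝ) (hν0 : 0 < ν) (hν1 : ν < 1)
    (hb0 : 0 < b) (hb1 : b < 1) :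
    (1 / (2 * π)) *
        (∫ ω in Set.Icc (-π) π,
          ‖(1 : ℂ) - (ν : ℂ) - Complex.exp (Complex.I * (ω : ℂ))‖ ^ 2 /
            ‖(1 : ℂ) - (b : ℂ) - Complex.exp (Complex.I * (ω : ℂ))‖ ^ 2)
      = (1 + (1 - ν) ^ 2) / (b * (2 - b)) - 2 * (1 - ν) * (1 - b) / (b * (2 - b)) :=
  integral_sq_ratio_eval_general ν b hb0 hb1
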